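/- arXiv:1901.07918 — 6 statements merged into one kernel-verified Lean document; each statement's English description precedes it below -/
import Mathlib

section
/- (Taylor's theorem, module version.) The augmented Taylor complex 0 → F_t → F_{t−1} → ⋯ → F_1 → F_0 = R → R/(𝔪_1,…,𝔪_t) → 0 is exact; that is, the Taylor complex T(𝔪_1,…,𝔪_t) is a free resolution of the R-module R/(𝔪_1,…,𝔪_t), where the augmentation F_0 = R·e_∅ → R/(𝔪_1,…,𝔪_t) is the natural projection. -/
/-!
Taylor's theorem (module version): the augmented Taylor complex
0 → F_t → ⋯ → F_1 → F_0 = R → R/(𝔪_1,…,𝔪_t) → 0 is exact.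

Monomials are given by exponent vectors `a i : Fin m →₀ ℕ`, 𝔪_i = monomial (a i) 1.
`TaylorX k m t s` is the free module F_s with basis {e_J : J ⊆ {1,…,t}, |J| = s};
note that `TaylorX k m t s` is the zero module for s > t, so exactness of the
augmented complex at every F_s (s ≥ 1) is expressed uniformly, including
injectivity of F_t → F_{t-1}.  Exactness at R/(𝔪_1,…,𝔪_t) is surjectivity of the
projection, exactness at F_0 says ker(augmentation) = im(d : F_1 → F_0), where the
augmentation sends x = f·e_∅ to the class of f in R/(𝔪_1,…,𝔪_t).
-/

open Finset MvPolynomial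

/-- sign(j, J): (−1)^(number of elements of J smaller than j). -/
def taylorSign {t : ℕ} (J : Finset (Fin t)) (j : Fin t) : ℤ :=
  (-1) ^ (J.filter fun i => i < j).card

/-- Exponent vector of the monomial 𝔪_J = lcm_{j ∈ J} 𝔪_j (pointwise maximum). -/
noncomputable def lcmExp {m t : ℕ} (a : Fin t → (Fin m →₀ ℕ)) (J : Finset (Fin t)) :
    Fin m →₀ ℕ :=
  J.sup a

/-- The s-th term of the Taylor complex: the free R-module with basis
{e_J : J ⊆ {1,…,t}, |J| = s}, R = k[v_1,…,v_m]. -/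
abbrev TaylorX (k : Type*) [CommRing k] (m t s : ℕ) : Type _ :=
  {J : Finset (Fin t) // J.card = s} →₀ MvPolynomial (Fin m) k

/-- The Taylor differential d(e_J) = Σ_{j∈J} sign(j,J)·(𝔪_J/𝔪_{J∖{j}})·e_{J∖{j}}. -/
noncomputable def taylorD {k : Type*} [CommRing k] {m t : ℕ}
    (a : Fin t → (Fin m →₀ ℕ)) (s : ℕ) :
    TaylorX k m t (s + 1) →ₗ[MvPolynomial (Fin m) k] TaylorX k m t s :=
  Finsupp.lsum ℕ fun J =>
    LinearMap.toSpanSingleton (MvPolynomial (Fin m) k) (TaylorX k m t s)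
      (∑ j ∈ J.1.attach,
        taylorSign J.1 j.1 •
          Finsupp.single
            ⟨J.1.erase j.1, by simp [Finset.card_erase_of_mem j.2, J.2]⟩
            (monomial (lcmExp a J.1 - lcmExp a (J.1.erase j.1)) (1 : k)))

/-!
Give `v^c e_K` the multidegree `c + lcm_{j ∈ K} a_j`; the differential preserves it. In
multidegree `b` the complex is the augmented chain complex of the full simplex on
`D_b = {i | 𝔪_i ∣ v^b}`, and coning off the least vertex `i` of `D_b` (`e_K ↦ e_{K ∪ {i}}` if
`i ∉ K`, else `0`) is a contracting homotopy `h` with `d h + h d = id`; taking the least vertex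
makes its sign in `K ∪ {i}` equal to `1`. Every basis vector of `F_s` with `s ≥ 1` has
`D_b ≠ ∅`, and `v^b e_∅` has `D_b ≠ ∅` exactly when `v^b ∈ (𝔪_1,…,𝔪_t)`. Finally `d² = 0`
because the two orders of deleting two indices cancel.
-/

theorem Finset.sum_sum_erase_eq_zero_of_antisymm {α M : Type*} [DecidableEq α] [AddCommGroup M]
    (K : Finset α) (f : α → α → M) (hf : ∀ i ∈ K, ∀ j ∈ K, i ≠ j → f i j = -f j i) :
    ∑ i ∈ K, ∑ j ∈ K.erase i, f i j = 0 := by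
  rw [← sum_finset_product' K.offDiag K (fun i => K.erase i) (by aesop)]
  refine sum_involution (fun p _ => p.swap) (fun p hp => ?_) (fun p hp _ => ?_)
    (fun p hp => mem_offDiag.mpr ?_) (fun _ _ => rfl)
  all_goals obtain ⟨hi, hj, hij⟩ := mem_offDiag.mp hp
  · rw [hf _ hi _ hj hij, Prod.fst_swap, Prod.snd_swap, neg_add_cancel]
  · exact fun h => hij (congrArg Prod.fst h).symm
  · exact ⟨hj, hi, hij.symm⟩

section Sign
variable {t : ℕ} {J : Finset (Fin t)} {i j : Fin t}

lemma taylorSign_eq_one (h : ∀ j ∈ J, i ≤ j) : taylorSign J i = 1 := by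
  rw [taylorSign, filter_false_of_mem fun j hj => not_lt.mpr (h j hj), card_empty, pow_zero]

lemma taylorSign_insert_of_lt (hij : i < j) (hi : i ∉ J) :
    taylorSign (insert i J) j = -taylorSign J j := by
  rw [taylorSign, taylorSign, filter_insert, if_pos hij,
    card_insert_of_notMem fun h => hi (mem_filter.mp h).1, pow_succ, mul_neg_one]

lemma taylorSign_mul_taylorSign_erase_of_lt (hi : i ∈ J) (hij : i < j) :
    taylorSign J i * taylorSign (J.erase i) j = -(taylorSign J j * taylorSign (J.erase j) i) := by
  have hmem : i ∈ J.filter (· < j) := mem_filter.mpr ⟨hi, hij⟩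
  obtain ⟨n, hn⟩ := Nat.exists_eq_add_one_of_ne_zero (card_ne_zero_of_mem hmem)
  have hj : (J.erase j).filter (· < i) = J.filter (· < i) := by
    rw [filter_erase, erase_eq_of_notMem fun h => (mem_filter.mp h).2.not_gt hij]
  rw [taylorSign, taylorSign, taylorSign, taylorSign, filter_erase, card_erase_of_mem hmem, hj, hn,
    Nat.add_sub_cancel, pow_succ]
  ring

lemma taylorSign_mul_taylorSign_erase (hi : i ∈ J) (hj : j ∈ J) (hij : i ≠ j) :
    taylorSign J i * taylorSign (J.erase i) j = -(taylorSign J j * taylorSign (J.erase j) i) := by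
  rcases hij.lt_or_gt with h | h
  · exact taylorSign_mul_taylorSign_erase_of_lt hi h
  · rw [taylorSign_mul_taylorSign_erase_of_lt hj h, neg_neg]

end Sign

section LcmExp
variable {m t : ℕ} (a : Fin t → (Fin m →₀ ℕ))

lemma lcmExp_mono {J K : Finset (Fin t)} (h : J ⊆ K) : lcmExp a J ≤ lcmExp a K := sup_mono h

lemma le_lcmExp {J : Finset (Fin t)} {j : Fin t} (h : j ∈ J) : a j ≤ lcmExp a J := le_sup h

lemma lcmExp_empty : lcmExp a ∅ = 0 := bot_eq_zero

lemma lcmExp_singleton (j : Fin t) : lcmExp a {j} = a j := sup_singleton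

lemma lcmExp_insert (i : Fin t) (J : Finset (Fin t)) :
    lcmExp a (insert i J) = a i ⊔ lcmExp a J := sup_insert

lemma add_lcmExp_sub_add_lcmExp (c : Fin m →₀ ℕ) {J K : Finset (Fin t)} (h : J ⊆ K) :
    c + (lcmExp a K - lcmExp a J) + lcmExp a J = c + lcmExp a K := by
  rw [add_assoc, tsub_add_cancel_of_le (lcmExp_mono a h)]

end LcmExp

section TaylorComplex
variable {k : Type*} [CommRing k] {m t : ℕ} (a : Fin t → (Fin m →₀ ℕ))

/-- The basis vector `v^c e_K` of `F_s`, read as `0` when `#K ≠ s`. -/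
noncomputable def taylorMonomial (s : ℕ) (K : Finset (Fin t)) (c : Fin m →₀ ℕ) :
    TaylorX k m t s :=
  if h : K.card = s then Finsupp.single ⟨K, h⟩ (monomial c 1) else 0

lemma taylorMonomial_of_card_eq {s : ℕ} {K : Finset (Fin t)} (h : K.card = s) (c : Fin m →₀ ℕ) :
    taylorMonomial (k := k) s K c = Finsupp.single ⟨K, h⟩ (monomial c 1) := dif_pos h

variable (k m t) in
noncomputable def taylorBasis (s : ℕ) :
    Module.Basis (Σ _ : {J : Finset (Fin t) // J.card = s}, Fin m →₀ ℕ) k (TaylorX k m t s) :=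
  Finsupp.basis fun _ => basisMonomials (Fin m) k

lemma taylorBasis_apply {s : ℕ} (K : {J : Finset (Fin t) // J.card = s}) (c : Fin m →₀ ℕ) :
    taylorBasis k m t s ⟨K, c⟩ = taylorMonomial s K.1 c := by
  rw [taylorBasis, Finsupp.coe_basis, coe_basisMonomials, taylorMonomial_of_card_eq K.2]

lemma taylorBasis_repr_apply {s : ℕ} (x : TaylorX k m t s) (K : {J : Finset (Fin t) // J.card = s})
    (c : Fin m →₀ ℕ) : (taylorBasis k m t s).repr x ⟨K, c⟩ = coeff c (x K) := rfl

lemma taylorBasis_ext {s : ℕ} {N : Type*} [AddCommGroup N] [Module k N]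
    {f g : TaylorX k m t s →ₗ[k] N}
    (h : ∀ K : Finset (Fin t), K.card = s → ∀ c,
      f (taylorMonomial s K c) = g (taylorMonomial s K c)) :
    f = g :=
  (taylorBasis k m t s).ext fun ⟨K, c⟩ => by rw [taylorBasis_apply]; exact h K.1 K.2 c

lemma taylorD_taylorMonomial (s : ℕ) {K : Finset (Fin t)} (hK : K.card = s + 1)
    (c : Fin m →₀ ℕ) :
    taylorD a s (taylorMonomial (s + 1) K c) = ∑ j ∈ K, taylorSign K j •
      taylorMonomial (k := k) s (K.erase j) (c + (lcmExp a K - lcmExp a (K.erase j))) := by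
  rw [taylorMonomial_of_card_eq hK, taylorD, Finsupp.lsum_single, LinearMap.toSpanSingleton_apply,
    smul_sum, ← sum_attach K]
  refine sum_congr rfl fun j _ => ?_
  rw [smul_comm, taylorMonomial_of_card_eq (by rw [card_erase_of_mem j.2, hK]; rfl),
    Finsupp.smul_single, smul_eq_mul, monomial_mul, mul_one]

lemma taylorD_taylorD (s : ℕ) (x : TaylorX k m t (s + 2)) :
    taylorD a s (taylorD a (s + 1) x) = 0 := by
  suffices ((taylorD a s).restrictScalars k ∘ₗ (taylorD a (s + 1)).restrictScalars k) = 0 from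
    LinearMap.congr_fun this x
  refine taylorBasis_ext fun K hK c => ?_
  simp only [LinearMap.comp_apply, LinearMap.restrictScalars_apply, LinearMap.zero_apply]
  rw [taylorD_taylorMonomial a (s + 1) hK, map_sum]
  set f : Fin t → Fin t → TaylorX k m t s := fun i j =>
    (taylorSign K i * taylorSign (K.erase i) j) •
      taylorMonomial s ((K.erase i).erase j) (c + (lcmExp a K - lcmExp a ((K.erase i).erase j)))
  have hface : ∀ i ∈ K, taylorD a s (taylorSign K i •
      taylorMonomial (s + 1) (K.erase i) (c + (lcmExp a K - lcmExp a (K.erase i)))) =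
      ∑ j ∈ K.erase i, f i j := by
    intro i hi
    rw [map_zsmul, taylorD_taylorMonomial a s (by rw [card_erase_of_mem hi, hK]; rfl), smul_sum]
    refine sum_congr rfl fun j _ => ?_
    rw [smul_smul, add_assoc, tsub_add_tsub_cancel (lcmExp_mono a (erase_subset i K))
      (lcmExp_mono a (erase_subset j _))]
  rw [sum_congr rfl hface]
  refine sum_sum_erase_eq_zero_of_antisymm K f fun i hi j hj hij => ?_
  simp only [f]
  rw [erase_right_comm, taylorSign_mul_taylorSign_erase hi hj hij, neg_smul]

def dvdIndices (b : Fin m →₀ ℕ) : Finset (Fin t) := univ.filter (a · ≤ b)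

variable {a} in
lemma mem_dvdIndices {b : Fin m →₀ ℕ} {i : Fin t} : i ∈ dvdIndices a b ↔ a i ≤ b := by
  simp [dvdIndices]

lemma min'_dvdIndices_le {K : Finset (Fin t)} {b : Fin m →₀ ℕ} (hK : lcmExp a K ≤ b)
    (hD : (dvdIndices a b).Nonempty) {j : Fin t} (hj : j ∈ K) : (dvdIndices a b).min' hD ≤ j :=
  min'_le _ _ (mem_dvdIndices.mpr ((le_lcmExp a hj).trans hK))

noncomputable def coneMonomial (s : ℕ) (K : Finset (Fin t)) (c : Fin m →₀ ℕ) : TaylorX k m t s :=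
  let b := c + lcmExp a K
  if hD : (dvdIndices a b).Nonempty then
    let i := (dvdIndices a b).min' hD
    if i ∈ K then 0 else taylorMonomial s (insert i K) (b - lcmExp a (insert i K))
  else 0

noncomputable def taylorHomotopy (s : ℕ) : TaylorX k m t s →ₗ[k] TaylorX k m t (s + 1) :=
  (taylorBasis k m t s).constr k fun x => coneMonomial a (s + 1) x.1.1 x.2

lemma taylorHomotopy_taylorMonomial {s : ℕ} {K : Finset (Fin t)} (hK : K.card = s)
    (c : Fin m →₀ ℕ) :
    taylorHomotopy a s (taylorMonomial s K c) = coneMonomial (k := k) a (s + 1) K c := by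
  rw [taylorHomotopy, ← taylorBasis_apply (K := ⟨K, hK⟩), Module.Basis.constr_basis]

section
variable {s : ℕ} {K : Finset (Fin t)} {c b : Fin m →₀ ℕ} (hb : c + lcmExp a K = b)
  (hD : (dvdIndices a b).Nonempty)
include hb

lemma coneMonomial_of_min'_mem (hi : (dvdIndices a b).min' hD ∈ K) :
    coneMonomial (k := k) a s K c = 0 := by
  subst hb; rw [coneMonomial, dif_pos hD, if_pos hi]

lemma coneMonomial_of_min'_notMem (hi : (dvdIndices a b).min' hD ∉ K) :
    coneMonomial (k := k) a s K c =
      taylorMonomial s (insert ((dvdIndices a b).min' hD) K)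
        (b - lcmExp a (insert ((dvdIndices a b).min' hD) K)) := by
  subst hb; rw [coneMonomial, dif_pos hD, if_neg hi]

lemma taylorD_coneMonomial_of_min'_notMem (hK : K.card = s) (hi : (dvdIndices a b).min' hD ∉ K) :
    taylorD a s (coneMonomial a (s + 1) K c) = taylorMonomial s K c -
      ∑ j ∈ K, taylorSign K j •
        coneMonomial (k := k) a s (K.erase j) (c + (lcmExp a K - lcmExp a (K.erase j))) := by
  set i := (dvdIndices a b).min' hD
  have hKb : lcmExp a K ≤ b := hb ▸ le_add_self
  have hiKb : lcmExp a (insert i K) ≤ b := by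
    rw [lcmExp_insert]
    exact sup_le (mem_dvdIndices.mp (min'_mem _ hD)) hKb
  have hbc : b - lcmExp a K = c := by rw [← hb, add_tsub_cancel_right]
  have hcard : (insert i K).card = s + 1 := by rw [card_insert_of_notMem hi, hK]
  rw [coneMonomial_of_min'_notMem a hb hD hi, taylorD_taylorMonomial a s hcard, sum_insert hi,
    erase_insert hi, taylorSign_eq_one fun j hj => ?apex,
    one_smul, tsub_add_tsub_cancel hiKb (lcmExp_mono a (subset_insert i K)), hbc,
    sub_eq_add_neg, ← sum_neg_distrib]
  case apex =>
    rcases mem_insert.mp hj with rfl | hj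
    exacts [le_rfl, min'_dvdIndices_le a hKb hD hj]
  congr 1
  refine sum_congr rfl fun j hj => ?_
  have hij : i < j := (min'_dvdIndices_le a hKb hD hj).lt_of_ne (ne_of_mem_of_not_mem hj hi).symm
  rw [coneMonomial_of_min'_notMem a ((add_lcmExp_sub_add_lcmExp a c (erase_subset j K)).trans hb)
    hD fun h => hi (mem_of_mem_erase h), erase_insert_of_ne hij.ne,
    tsub_add_tsub_cancel hiKb (lcmExp_mono a (insert_subset_insert i (erase_subset j K))),
    taylorSign_insert_of_lt hij hi, neg_smul]

lemma sum_coneMonomial_erase_of_min'_mem (hi : (dvdIndices a b).min' hD ∈ K) :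
    ∑ j ∈ K, taylorSign K j •
      coneMonomial (k := k) a s (K.erase j) (c + (lcmExp a K - lcmExp a (K.erase j))) =
      taylorMonomial s K c := by
  set i := (dvdIndices a b).min' hD
  have hface : ∀ j ∈ K, c + (lcmExp a K - lcmExp a (K.erase j)) + lcmExp a (K.erase j) = b :=
    fun j _ => (add_lcmExp_sub_add_lcmExp a c (erase_subset j K)).trans hb
  rw [sum_eq_single_of_mem i hi fun j hj hji => by
      rw [coneMonomial_of_min'_mem a (hface j hj) hD (mem_erase.mpr ⟨hji.symm, hi⟩), smul_zero],
    taylorSign_eq_one fun j => min'_dvdIndices_le a (hb ▸ le_add_self) hD,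
    coneMonomial_of_min'_notMem a (hface i hi) hD (notMem_erase i K), insert_erase hi, one_smul,
    ← hb, add_tsub_cancel_right]

end

lemma taylorD_taylorHomotopy_add_taylorHomotopy_taylorD (s : ℕ) (x : TaylorX k m t (s + 1)) :
    taylorD a (s + 1) (taylorHomotopy a (s + 1) x) + taylorHomotopy a s (taylorD a s x) = x := by
  suffices (taylorD a (s + 1)).restrictScalars k ∘ₗ taylorHomotopy a (s + 1) +
      taylorHomotopy a s ∘ₗ (taylorD a s).restrictScalars k = LinearMap.id from
    LinearMap.congr_fun this x
  refine taylorBasis_ext fun K hK c => ?_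
  obtain ⟨j, hj⟩ : K.Nonempty := card_pos.mp (by omega)
  have hD : (dvdIndices a (c + lcmExp a K)).Nonempty :=
    ⟨j, mem_dvdIndices.mpr ((le_lcmExp a hj).trans le_add_self)⟩
  have hdh : taylorHomotopy a s (taylorD a s (taylorMonomial (s + 1) K c)) =
      ∑ j ∈ K, taylorSign K j •
        coneMonomial (k := k) a (s + 1) (K.erase j) (c + (lcmExp a K - lcmExp a (K.erase j))) := by
    rw [taylorD_taylorMonomial a s hK, map_sum]
    refine sum_congr rfl fun j hj => ?_
    rw [map_zsmul, taylorHomotopy_taylorMonomial a (by rw [card_erase_of_mem hj, hK]; rfl)]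
  simp only [LinearMap.add_apply, LinearMap.comp_apply, LinearMap.restrictScalars_apply,
    LinearMap.id_apply]
  rw [hdh, taylorHomotopy_taylorMonomial a hK]
  by_cases hi : (dvdIndices a (c + lcmExp a K)).min' hD ∈ K
  · rw [coneMonomial_of_min'_mem a rfl hD hi, map_zero, zero_add,
      sum_coneMonomial_erase_of_min'_mem a rfl hD hi]
  · rw [taylorD_coneMonomial_of_min'_notMem a rfl hD hK hi, sub_add_cancel]

lemma taylorD_zero_apply_mem_span (y : TaylorX k m t 1) :
    taylorD a 0 y ⟨∅, card_empty⟩ ∈ Ideal.span (Set.range fun i => monomial (a i) (1 : k)) := by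
  induction y using Finsupp.induction_linear with
  | zero => simp
  | add y z hy hz => rw [map_add, Finsupp.add_apply]; exact add_mem hy hz
  | single K p =>
    obtain ⟨j, hj⟩ := card_eq_one.mp K.2
    have hdj : taylorD a 0 (taylorMonomial 1 K.1 0) =
        Finsupp.single ⟨∅, card_empty⟩ (monomial (a j) (1 : k)) := by
      rw [taylorD_taylorMonomial a 0 K.2, hj, sum_singleton, erase_singleton,
        taylorSign_eq_one (by simp), one_smul, taylorMonomial_of_card_eq card_empty, zero_add,
        lcmExp_singleton, lcmExp_empty, tsub_zero]
    rw [← mul_one p, ← smul_eq_mul, ← Finsupp.smul_single, one_def,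
      ← taylorMonomial_of_card_eq K.2, map_smul, hdj, Finsupp.smul_apply, Finsupp.single_eq_same]
    exact Ideal.mul_mem_left _ p (Ideal.subset_span ⟨j, rfl⟩)

lemma taylorD_taylorHomotopy_of_mem_span (x : TaylorX k m t 0)
    (hx : x ⟨∅, card_empty⟩ ∈ Ideal.span (Set.range fun i => monomial (a i) (1 : k))) :
    taylorD a 0 (taylorHomotopy a 0 x) = x := by
  rw [Set.range_comp' (fun b => monomial b (1 : k)) a, mem_ideal_span_monomial_image] at hx
  have hbasis : ∀ i ∈ ((taylorBasis k m t 0).repr x).support,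
      taylorD a 0 (taylorHomotopy a 0 (taylorBasis k m t 0 i)) = taylorBasis k m t 0 i := by
    rintro ⟨K, c⟩ hKc
    obtain rfl : K = ⟨∅, card_empty⟩ := Subtype.ext (card_eq_zero.mp K.2)
    rw [Finsupp.mem_support_iff, taylorBasis_repr_apply, ← mem_support_iff] at hKc
    obtain ⟨_, ⟨i, rfl⟩, hi⟩ := hx c hKc
    have hc : c + lcmExp a ∅ = c := by rw [lcmExp_empty, add_zero]
    rw [taylorBasis_apply, taylorHomotopy_taylorMonomial a card_empty,
      taylorD_coneMonomial_of_min'_notMem a hc ⟨i, mem_dvdIndices.mpr hi⟩ card_empty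
        (notMem_empty _), sum_empty, sub_zero]
  rw [← (taylorBasis k m t 0).linearCombination_repr x, Finsupp.linearCombination_apply,
    map_finsuppSum, map_finsuppSum]
  refine Finsupp.sum_congr fun i hi => ?_
  rw [map_smul, LinearMap.map_smul_of_tower, hbasis i hi]

end TaylorComplex

/-- Taylor's theorem, module version: the Taylor complex
T(𝔪_1,…,𝔪_t) is a free resolution of R/(𝔪_1,…,𝔪_t): the augmented complex
0 → F_t → ⋯ → F_1 → F_0 = R → R/(𝔪_1,…,𝔪_t) → 0 is exact. -/
theorem taylor_is_resolution {k : Type*} [CommRing k] {m t : ℕ}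
    (a : Fin t → (Fin m →₀ ℕ)) :
    -- exactness at R/(𝔪_1,…,𝔪_t): surjectivity of the augmentation F₀ = R → R/(𝔪)
    Function.Surjective
      (Ideal.Quotient.mk (Ideal.span (Set.range fun i => monomial (a i) (1 : k)))) ∧
    -- exactness at F₀: ker(F₀ → R/(𝔪)) = im(d : F₁ → F₀)
    (∀ x : TaylorX k m t 0,
      Ideal.Quotient.mk (Ideal.span (Set.range fun i => monomial (a i) (1 : k)))
          (x ⟨∅, Finset.card_empty⟩) = 0 ↔
        ∃ y : TaylorX k m t 1, taylorD (k := k) a 0 y = x) ∧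
    -- exactness at F_s for every s ≥ 1 (F_s = 0 for s > t, so this includes
    -- injectivity of F_t → F_{t-1})
    (∀ s : ℕ, ∀ x : TaylorX k m t (s + 1),
      taylorD (k := k) a s x = 0 ↔ ∃ y : TaylorX k m t (s + 2), taylorD (k := k) a (s + 1) y = x) := by
  refine ⟨Ideal.Quotient.mk_surjective, fun x => ?_, fun s x => ?_⟩
  · rw [Ideal.Quotient.eq_zero_iff_mem]
    refine ⟨fun hx => ⟨taylorHomotopy a 0 x, taylorD_taylorHomotopy_of_mem_span a x hx⟩, ?_⟩
    rintro ⟨y, rfl⟩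
    exact taylorD_zero_apply_mem_span a y
  · refine ⟨fun hx => ⟨taylorHomotopy a (s + 1) x, ?_⟩, ?_⟩
    · simpa [hx] using taylorD_taylorHomotopy_add_taylorHomotopy_taylorD a s x
    · rintro ⟨y, rfl⟩
      exact taylorD_taylorD a s y
end

section
/- Let 𝔪_1,…,𝔪_t be monomials in R = k[v_1,…,v_m] and set n_i = 𝔪_i/gcd(𝔪_i,𝔪_t) for i = 1,…,t−1. Then the sequence 0 → R/(n_1,…,n_{t−1}) → R/(𝔪_1,…,𝔪_{t−1}) → R/(𝔪_1,…,𝔪_t) → 0 is exact, where the first map is induced by multiplication by 𝔪_t and the second map is the natural projection. In particular, multiplication by 𝔪_t induces an injective map R/(n_1,…,n_{t−1}) → R/(𝔪_1,…,𝔪_{t−1}) whose image is the kernel of the projection R/(𝔪_1,…,𝔪_{t−1}) → R/(𝔪_1,…,𝔪_t). -/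
/-!
Membership in a monomial ideal is read off the support: `f ∈ (v^d : d ∈ s)` iff every exponent of
`f` dominates some `d ∈ s`. Multiplying by `v^b` shifts the support by `b`, and `d ≤ b + c` iff
`d - b ≤ c`; since `a - a ⊓ b = a - b`, this identifies the colon ideal `(𝔪_1,…,𝔪_{t-1}) : 𝔪_t`
with `(n_1,…,n_{t-1})`. Exactness in the middle and surjectivity on the right are formal.
-/

open MvPolynomial

theorem Finsupp.tsub_inf_self_right {σ α : Type*} [AddCommMonoid α] [LinearOrder α]
    [CanonicallyOrderedAdd α] [Sub α] [OrderedSub α] (a b : σ →₀ α) : a - a ⊓ b = a - b := by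
  ext i
  exact tsub_min

theorem Ideal.mem_span_insert_iff_exists_sub_mul_mem {α : Type*} [CommRing α] {x y : α}
    {s : Set α} : x ∈ Ideal.span (insert y s) ↔ ∃ a, x - y * a ∈ Ideal.span s := by
  rw [Ideal.mem_span_insert]
  constructor
  · rintro ⟨a, z, hz, rfl⟩
    exact ⟨a, by rwa [mul_comm, add_sub_cancel_left]⟩
  · rintro ⟨a, h⟩
    exact ⟨a, x - y * a, h, by ring⟩

namespace MvPolynomial

variable {σ R : Type*} [CommSemiring R]

theorem monomial_one_mul_mem_span_monomial_image_iff {s : Set (σ →₀ ℕ)} {b : σ →₀ ℕ}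
    {f : MvPolynomial σ R} :
    monomial b (1 : R) * f ∈ Ideal.span ((fun d => monomial d (1 : R)) '' s) ↔
      f ∈ Ideal.span ((fun d => monomial d (1 : R)) '' ((· - b) '' s)) := by
  simp only [mem_ideal_span_monomial_image, Set.exists_mem_image, tsub_le_iff_left]
  constructor
  · intro h c hc
    exact h (b + c) (by rwa [mem_support_iff, coeff_monomial_mul, one_mul, ← mem_support_iff])
  · intro h e he
    rw [mem_support_iff, coeff_monomial_mul'] at he
    split_ifs at he with hbe
    · obtain ⟨d, hd, hde⟩ := h (e - b) (by rwa [mem_support_iff, ← one_mul (coeff _ f)])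
      exact ⟨d, hd, hde.trans (add_tsub_cancel_of_le hbe).le⟩
    · exact absurd rfl he

end MvPolynomial

theorem monomial_ideal_ses {k : Type*} [CommRing k] {m n : ℕ}
    (a : Fin n → (Fin m →₀ ℕ)) (b : Fin m →₀ ℕ) :
    (∀ f : MvPolynomial (Fin m) k,
      f ∈ Ideal.span (Set.range fun i => monomial (a i - a i ⊓ b) (1 : k)) ↔
        monomial b (1 : k) * f ∈ Ideal.span (Set.range fun i => monomial (a i) (1 : k))) ∧
    (∀ g : MvPolynomial (Fin m) k,
      g ∈ Ideal.span (insert (monomial b (1 : k))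
            (Set.range fun i => monomial (a i) (1 : k))) ↔
        ∃ f : MvPolynomial (Fin m) k,
          g - monomial b (1 : k) * f ∈ Ideal.span (Set.range fun i => monomial (a i) (1 : k))) ∧
    Function.Surjective
      (Ideal.Quotient.factor
        (S := Ideal.span (Set.range fun i => monomial (a i) (1 : k)))
        (T := Ideal.span (insert (monomial b (1 : k))
          (Set.range fun i => monomial (a i) (1 : k))))
        (Ideal.span_mono (Set.subset_insert (monomial b (1 : k))
          (Set.range fun i => monomial (a i) (1 : k))))) := by
  have range_monomial (e : Fin n → (Fin m →₀ ℕ)) :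
      (Set.range fun i => monomial (e i) (1 : k)) = (fun d => monomial d (1 : k)) '' Set.range e :=
    Set.range_comp (fun d => monomial d (1 : k)) e
  refine ⟨fun f => ?_, fun g => Ideal.mem_span_insert_iff_exists_sub_mul_mem,
    Ideal.Quotient.factor_surjective _⟩
  simp_rw [Finsupp.tsub_inf_self_right]
  rw [range_monomial (fun i => a i - b), range_monomial,
    monomial_one_mul_mem_span_monomial_image_iff, ← Set.range_comp (· - b) a]
  rfl
end

section
/- Let 𝔪_1,…,𝔪_t be monomials in R = k[v_1,…,v_m] and n_i = 𝔪_i/gcd(𝔪_i,𝔪_t) for i = 1,…,t−1. The R-linear maps φ̃_s from the s-th term of T(n_1,…,n_{t−1}) to the s-th term of T(𝔪_1,…,𝔪_{t−1}) defined on basis elements by φ̃(ē_J) = (𝔪_{J∪{t}}/𝔪_J)·e_J, for J ⊆ {1,…,t−1} with |J| = s, commute with the Taylor differentials (i.e. φ̃ is a chain map). Moreover in degree 0 the map φ̃_0: R·ē_∅ → R·e_∅ is multiplication by 𝔪_t, so φ̃ is a lift of the map ·𝔪_t : R/(n_1,…,n_{t−1}) → R/(𝔪_1,…,𝔪_{t−1})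 through the augmentations. -/
/-!
Monomials in R = k[v_1,…,v_m] are given by exponent vectors in `Fin m →₀ ℕ`:
𝔪_1,…,𝔪_{t−1} are `monomial (a i) 1` (indexed by `i : Fin n`, n = t−1) and
𝔪_t = `monomial b 1`; n_i = 𝔪_i/gcd(𝔪_i,𝔪_t) has exponent vector `a i - a i ⊓ b`.
𝔪_{J∪{t}} has exponent vector `J.sup a ⊔ b`, so 𝔪_{J∪{t}}/𝔪_J is the monomial
with exponent vector `(J.sup a ⊔ b) - J.sup a`.  Both Taylor complexes have the
same underlying free modules `TaylorX k m n s` (with basis e_J, |J| = s), only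
the differentials differ.
-/

open Finset MvPolynomial

/-- The map φ̃ in degree s, given on basis elements by
φ̃(ē_J) = (𝔪_{J∪{t}}/𝔪_J)·e_J. -/
noncomputable def taylorPhi {k : Type*} [CommRing k] {m n : ℕ}
    (a : Fin n → (Fin m →₀ ℕ)) (b : Fin m →₀ ℕ) (s : ℕ) :
    TaylorX k m n s →ₗ[MvPolynomial (Fin m) k] TaylorX k m n s :=
  Finsupp.lsum ℕ fun J =>
    LinearMap.toSpanSingleton (MvPolynomial (Fin m) k) (TaylorX k m n s)
      (Finsupp.single J (monomial ((lcmExp a J.1 ⊔ b) - lcmExp a J.1) (1 : k)))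

/-!
On a basis element e_J both d ∘ φ̃ and φ̃ ∘ d are sums over j ∈ J with the same signs, and
the coefficients of e_{J∖{j}} agree:
(𝔪_{J∪{t}}/𝔪_J)·(𝔪_J/𝔪_{J∖{j}}) and (𝔪_{(J∖{j})∪{t}}/𝔪_{J∖{j}})·(n_J/n_{J∖{j}}) are both
𝔪_{J∪{t}}/𝔪_{J∖{j}}. For the second one this uses n_J = 𝔪_J/gcd(𝔪_J, 𝔪_t), i.e. on exponents
the lcm (a pointwise maximum) commutes with truncated subtraction of b.
-/

namespace Finsupp

variable {ι κ : Type*}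

lemma finset_sup_tsub_right (s : Finset κ) (f : κ → ι →₀ ℕ) (b : ι →₀ ℕ) :
    s.sup (fun k => f k - b) = s.sup f - b := by
  classical
  induction s using Finset.induction_on with
  | empty => simp [bot_eq_zero]
  | insert _ _ _ ih =>
    ext i
    simp only [Finset.sup_insert, ih, sup_apply, tsub_apply]
    omega

lemma tsub_inf_self (x b : ι →₀ ℕ) : x - x ⊓ b = x - b := by
  ext i
  simp only [tsub_apply, inf_apply]
  omega

lemma sup_tsub_eq_sup_tsub_add_tsub_tsub_tsub {x y : ι →₀ ℕ} (b : ι →₀ ℕ) (hyx : y ≤ x) :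
    x ⊔ b - y = (y ⊔ b - y) + (x - b - (y - b)) := by
  ext i
  have := hyx i
  simp only [add_apply, tsub_apply, sup_apply]
  omega

end Finsupp

section Taylor

variable {k : Type*} [CommRing k] {m n : ℕ}

lemma lcmExp_erase_le (a : Fin n → (Fin m →₀ ℕ)) (J : Finset (Fin n)) (j : Fin n) :
    lcmExp a (J.erase j) ≤ lcmExp a J :=
  Finset.sup_mono (Finset.erase_subset j J)

lemma lcmExp_tsub_inf (a : Fin n → (Fin m →₀ ℕ)) (b : Fin m →₀ ℕ) (J : Finset (Fin n)) :
    lcmExp (fun i => a i - a i ⊓ b) J = lcmExp a J - b := by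
  simp only [lcmExp, Finsupp.tsub_inf_self, Finsupp.finset_sup_tsub_right]

lemma lcmExp_sup_tsub_erase (a : Fin n → (Fin m →₀ ℕ)) (b : Fin m →₀ ℕ)
    (J : Finset (Fin n)) (j : Fin n) :
    (lcmExp a J ⊔ b - lcmExp a J) + (lcmExp a J - lcmExp a (J.erase j)) =
      (lcmExp a (J.erase j) ⊔ b - lcmExp a (J.erase j)) +
        (lcmExp (fun i => a i - a i ⊓ b) J - lcmExp (fun i => a i - a i ⊓ b) (J.erase j)) := by
  have hle := lcmExp_erase_le a J j
  rw [tsub_add_tsub_cancel le_sup_left hle, lcmExp_tsub_inf, lcmExp_tsub_inf]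
  exact Finsupp.sup_tsub_eq_sup_tsub_add_tsub_tsub_tsub b hle

lemma taylorPhi_single (a : Fin n → (Fin m →₀ ℕ)) (b : Fin m →₀ ℕ) {s : ℕ}
    (J : {J : Finset (Fin n) // J.card = s}) (r : MvPolynomial (Fin m) k) :
    taylorPhi a b s (Finsupp.single J r) =
      Finsupp.single J (monomial (lcmExp a J.1 ⊔ b - lcmExp a J.1) 1 * r) := by
  simp [taylorPhi, Finsupp.smul_single, mul_comm]

lemma taylorPhi_apply (a : Fin n → (Fin m →₀ ℕ)) (b : Fin m →₀ ℕ) {s : ℕ}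
    (x : TaylorX k m n s) (J : {J : Finset (Fin n) // J.card = s}) :
    taylorPhi a b s x J = monomial (lcmExp a J.1 ⊔ b - lcmExp a J.1) 1 * x J := by
  induction x using Finsupp.induction_linear with
  | zero => simp
  | add x y hx hy => simp [hx, hy, mul_add]
  | single J' r =>
    rw [taylorPhi_single]
    by_cases h : J' = J
    · subst h; simp
    · simp [h]

lemma taylorD_single_one (a : Fin n → (Fin m →₀ ℕ)) {s : ℕ}
    (J : {J : Finset (Fin n) // J.card = s + 1}) :
    taylorD a s (Finsupp.single J 1) =
      ∑ j ∈ J.1.attach, taylorSign J.1 j.1 •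
        Finsupp.single ⟨J.1.erase j.1, by simp [Finset.card_erase_of_mem j.2, J.2]⟩
          (monomial (lcmExp a J.1 - lcmExp a (J.1.erase j.1)) (1 : k)) := by
  simp [taylorD]

end Taylor

/-- φ̃ commutes with the Taylor differentials of T(n_1,…,n_{t−1})
and T(𝔪_1,…,𝔪_{t−1}) (i.e. φ̃ is a chain map), and in degree 0 it is
multiplication by 𝔪_t (hence φ̃ is a lift of ·𝔪_t : R/(n_1,…,n_{t−1}) →
R/(𝔪_1,…,𝔪_{t−1}) through the augmentations e_∅ ↦ 1). -/
theorem taylorPhi_chain_map {k : Type*} [CommRing k] {m n : ℕ}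
    (a : Fin n → (Fin m →₀ ℕ)) (b : Fin m →₀ ℕ) :
    (∀ s : ℕ,
      (taylorD (k := k) a s).comp (taylorPhi (k := k) a b (s + 1)) =
        (taylorPhi (k := k) a b s).comp (taylorD (k := k) (fun i => a i - a i ⊓ b) s)) ∧
    (∀ x : TaylorX k m n 0,
      (taylorPhi (k := k) a b 0 x) ⟨∅, Finset.card_empty⟩ =
        monomial b (1 : k) * x ⟨∅, Finset.card_empty⟩) := by
  refine ⟨fun s => ?_, fun x => ?_⟩
  · refine Finsupp.lhom_ext' fun J => LinearMap.ext_ring ?_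
    simp only [LinearMap.comp_apply, Finsupp.lsingle_apply, taylorPhi_single, ← smul_eq_mul,
      ← Finsupp.smul_single, map_smul, taylorD_single_one, map_sum, Finset.smul_sum]
    refine Finset.sum_congr rfl fun j _ => ?_
    simp only [taylorPhi_single, Finsupp.smul_single, smul_eq_mul, mul_smul_comm, monomial_mul,
      one_mul, lcmExp_sup_tsub_erase]
  · simp [taylorPhi_apply, lcmExp, bot_eq_zero]
end

section
/- (Taylor's theorem, dual version, underlying complex.) The augmented cochain complex 0 → C(𝔪_1,…,𝔪_t) → I^0 → I^1 → ⋯ → I^t → 0 of k-modules is exact, where the first map sends a basis monomial x^α of C(𝔪_1,…,𝔪_t) to x^α e^∅ ∈ I^0. In particular the dual Taylor complex T′(𝔪_1,…,𝔪_t) is a resolution of C(𝔪_1,…,𝔪_t). -/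
/-!
STATEMENT 10 (Taylor's theorem, dual version): the augmented cochain complex
0 → C(𝔪_1,…,𝔪_t) → I^0 → I^1 → ⋯ → I^t → 0 of k-modules is exact, where the
first map sends a basis monomial x^α to x^α e^∅.

Monomials in x_1,…,x_m are given by exponent vectors in `Fin m →₀ ℕ`;
`DualX k m t s` is the free k-module I^s with basis
{x^α e^J : α ∈ ℕ^m, J ⊆ {1,…,t}, |J| = s}; note that I^s = 0 for s > t, so
exactness at every I^s with s ≥ 1 (including surjectivity of I^{t−1} → I^t)
is expressed uniformly.  `CMod k m a` is the free k-module C(𝔪_1,…,𝔪_t) with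
basis the monomials x^α divisible by none of the 𝔪_i ("¬ a i ≤ α").
-/

open Finset

/-- The s-th term I^s of the dual Taylor complex: the free k-module with basis
{x^α e^J : α ∈ ℕ^m, J ⊆ {1,…,t}, |J| = s}. -/
abbrev DualX (k : Type*) [CommRing k] (m t s : ℕ) : Type _ :=
  ((Fin m →₀ ℕ) × {J : Finset (Fin t) // J.card = s}) →₀ k

open scoped Classical in
/-- The dual Taylor differential
∂(x^α e^J) = Σ_{j∉J} sign(j,J)·(x^α·𝔪_J/𝔪_{J∪{j}})·e^{J∪{j}},
a summand being zero unless 𝔪_{J∪{j}} divides x^α·𝔪_J. -/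
noncomputable def dualD {k : Type*} [CommRing k] {m t : ℕ}
    (a : Fin t → (Fin m →₀ ℕ)) (s : ℕ) :
    DualX k m t s →ₗ[k] DualX k m t (s + 1) :=
  Finsupp.lsum ℕ fun p =>
    LinearMap.toSpanSingleton k (DualX k m t (s + 1))
      (∑ j ∈ p.2.1ᶜ.attach,
        taylorSign p.2.1 j.1 •
          (if lcmExp a (insert j.1 p.2.1) ≤ p.1 + lcmExp a p.2.1 then
            Finsupp.single
              (p.1 + lcmExp a p.2.1 - lcmExp a (insert j.1 p.2.1),
                ⟨insert j.1 p.2.1, by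
                  rw [Finset.card_insert_of_notMem (Finset.mem_compl.mp j.2), p.2.2]⟩)
              (1 : k)
          else 0))

/-- The free k-module C(𝔪_1,…,𝔪_t), with basis the monomials x^α divisible by
none of the monomials 𝔪_i. -/
abbrev CMod (k : Type*) [CommRing k] (m t : ℕ) (a : Fin t → (Fin m →₀ ℕ)) : Type _ :=
  {α : Fin m →₀ ℕ // ∀ i, ¬ a i ≤ α} →₀ k

/-- The coaugmentation C(𝔪_1,…,𝔪_t) → I^0, x^α ↦ x^α e^∅. -/
noncomputable def cIncl {k : Type*} [CommRing k] {m t : ℕ} (a : Fin t → (Fin m →₀ ℕ)) :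
    CMod k m t a →ₗ[k] DualX k m t 0 :=
  Finsupp.lsum ℕ fun α =>
    LinearMap.toSpanSingleton k (DualX k m t 0)
      (Finsupp.single (α.1, ⟨∅, Finset.card_empty⟩) (1 : k))

/-!
Give `x^α e^J` the multidegree `β = α + 𝔪_J`; the differential preserves it. In multidegree `β`
the basis vectors are the `e^J` with `𝔪_J ∣ x^β`, i.e. with `J ⊆ S_β = {i : 𝔪_i ∣ x^β}`, and
`∂` becomes the augmented simplicial cochain differential of the full simplex on `S_β`. If
`S_β = ∅` only `e^∅` survives, and it is the image of `x^β ∈ C`. Otherwise coning off from a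
vertex `j₀ ∈ S_β` contracts the piece: `h(e^J) = ± e^(J \ j₀)` if `j₀ ∈ J` and `0` otherwise.
Taking `j₀ = min S_β` in every multidegree gives a contracting homotopy of the augmented complex.
-/

lemma LinearMap.exact_of_comp_eq_zero_of_add_eq_id {R M N P : Type*} [Semiring R]
    [AddCommMonoid M] [AddCommMonoid N] [AddCommMonoid P] [Module R M] [Module R N]
    [Module R P] {f : M →ₗ[R] N} {g : N →ₗ[R] P} {h : N →ₗ[R] M} {h' : P →ₗ[R] N}
    (hgf : g ∘ₗ f = 0) (hid : f ∘ₗ h + h' ∘ₗ g = LinearMap.id) : Function.Exact f g :=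
  LinearMap.exact_of_comp_of_mem_range hgf fun x hx =>
    ⟨h x, by simpa [hx] using LinearMap.congr_fun hid x⟩

namespace DualTaylor

variable {k : Type*} [CommRing k] {m t : ℕ} (a : Fin t → (Fin m →₀ ℕ))

lemma taylorSign_mul_self (J : Finset (Fin t)) (j : Fin t) :
    taylorSign J j * taylorSign J j = 1 := by
  rw [taylorSign, ← pow_add]
  exact Even.neg_one_pow ⟨_, rfl⟩

lemma taylorSign_insert {J : Finset (Fin t)} {i : Fin t} (hi : i ∉ J) (j : Fin t) :
    taylorSign (insert i J) j = (if i < j then -1 else 1) * taylorSign J j := by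
  unfold taylorSign
  rw [filter_insert]
  split_ifs
  · rw [card_insert_of_notMem fun hc => hi (mem_of_mem_filter _ hc), pow_succ, mul_comm]
  · rw [one_mul]

lemma taylorSign_mul_taylorSign_insert {J : Finset (Fin t)} {i j : Fin t} (hi : i ∉ J)
    (hj : j ∉ J) (hij : i ≠ j) :
    taylorSign J i * taylorSign (insert i J) j =
      -(taylorSign J j * taylorSign (insert j J) i) := by
  rw [taylorSign_insert hi, taylorSign_insert hj]
  rcases hij.lt_or_gt with h | h
  · rw [if_pos h, if_neg h.not_gt]; ring
  · rw [if_neg h.not_gt, if_pos h]; ring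

lemma taylorSign_insert_mul_taylorSign_insert {J : Finset (Fin t)} {i j : Fin t} (hi : i ∉ J)
    (hj : j ∉ J) (hij : i ≠ j) :
    taylorSign (insert i J) j * taylorSign (insert j J) i =
      -(taylorSign J i * taylorSign J j) := by
  rw [taylorSign_insert hi, taylorSign_insert hj]
  rcases hij.lt_or_gt with h | h
  · rw [if_pos h, if_neg h.not_gt]; ring
  · rw [if_neg h.not_gt, if_pos h]; ring

lemma lcmExp_empty : lcmExp a ∅ = 0 :=
  sup_empty

lemma lcmExp_insert (j : Fin t) (J : Finset (Fin t)) :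
    lcmExp a (insert j J) = a j ⊔ lcmExp a J :=
  sup_insert

/-- `x^(β - 𝔪_J) e^J`, the basis vector of `I^s` of multidegree `β` indexed by `J`;
it is `0` unless `|J| = s` and `𝔪_J ∣ x^β`. -/
noncomputable def basisOfDeg (s : ℕ) (β : Fin m →₀ ℕ) (J : Finset (Fin t)) :
    DualX k m t s :=
  if h : J.card = s ∧ lcmExp a J ≤ β then Finsupp.single (β - lcmExp a J, ⟨J, h.1⟩) 1 else 0

lemma single_eq_basisOfDeg {s : ℕ} (α : Fin m →₀ ℕ) {J : Finset (Fin t)} (hJ : J.card = s) :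
    (Finsupp.single (α, ⟨J, hJ⟩) 1 : DualX k m t s) = basisOfDeg a s (α + lcmExp a J) J := by
  rw [basisOfDeg, dif_pos ⟨hJ, le_add_self⟩, add_tsub_cancel_right]

lemma basisOfDeg_eq_zero {s : ℕ} {β : Fin m →₀ ℕ} {J : Finset (Fin t)}
    (h : ¬ (J.card = s ∧ lcmExp a J ≤ β)) : (basisOfDeg a s β J : DualX k m t s) = 0 :=
  dif_neg h

lemma basisOfDeg_zero_empty (β : Fin m →₀ ℕ) :
    (basisOfDeg a 0 β ∅ : DualX k m t 0) = Finsupp.single (β, ⟨∅, card_empty⟩) 1 := by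
  simpa [lcmExp_empty] using (single_eq_basisOfDeg (k := k) a β card_empty).symm

lemma hom_ext_basisOfDeg {N : Type*} [AddCommMonoid N] [Module k N] {s : ℕ}
    {f g : DualX k m t s →ₗ[k] N}
    (h : ∀ β J, J.card = s → lcmExp a J ≤ β →
      f (basisOfDeg a s β J) = g (basisOfDeg a s β J)) :
    f = g :=
  Finsupp.lhom_ext' fun ⟨α, J, hJ⟩ => LinearMap.ext_ring <| by
    simpa [single_eq_basisOfDeg a α hJ] using h _ J hJ le_add_self

lemma dualD_basisOfDeg (s : ℕ) (β : Fin m →₀ ℕ) (J : Finset (Fin t)) :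
    dualD a s (basisOfDeg a s β J : DualX k m t s) =
      ∑ j ∈ Jᶜ, taylorSign J j • basisOfDeg a (s + 1) β (insert j J) := by
  by_cases h : J.card = s ∧ lcmExp a J ≤ β
  · rw [basisOfDeg, dif_pos h, dualD, Finsupp.lsum_single, LinearMap.toSpanSingleton_apply,
      one_smul, ← sum_attach Jᶜ]
    refine sum_congr rfl fun j _ => ?_
    dsimp only
    have hcard : (insert j.1 J).card = s + 1 := by
      rw [card_insert_of_notMem (mem_compl.mp j.2), h.1]
    rw [tsub_add_cancel_of_le h.2, basisOfDeg]
    congr 1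
    simp only [hcard, true_and]
    split_ifs <;> rfl
  · rw [basisOfDeg_eq_zero a h, map_zero]
    refine (sum_eq_zero fun j hj => ?_).symm
    rw [basisOfDeg_eq_zero a, smul_zero]
    rw [card_insert_of_notMem (mem_compl.mp hj), lcmExp_insert, sup_le_iff]
    exact fun h' => h ⟨by omega, h'.2.2⟩

lemma dualD_dualD_basisOfDeg (s : ℕ) (β : Fin m →₀ ℕ) {J : Finset (Fin t)}
    (hJ : J.card = s) :
    dualD a (s + 1) (dualD a s (basisOfDeg a s β J : DualX k m t s)) = 0 := by
  set F : Fin t × Fin t → DualX k m t (s + 1 + 1) := fun p =>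
    (taylorSign J p.1 * taylorSign (insert p.1 J) p.2) •
      basisOfDeg a (s + 1 + 1) β (insert p.2 (insert p.1 J))
  have hdiag : ∀ j, F (j, j) = 0 := fun j => by
    simp only [F]
    rw [basisOfDeg_eq_zero a, smul_zero]
    rw [insert_idem]
    rintro ⟨hcard, -⟩
    have := card_insert_le j J
    omega
  have hswap : ∀ j ∈ Jᶜ, ∀ j' ∈ Jᶜ, j ≠ j' → F (j, j') + F (j', j) = 0 := by
    intro j hj j' hj' hne
    simp only [F, insert_comm j' j J, ← add_smul,
      taylorSign_mul_taylorSign_insert (mem_compl.mp hj) (mem_compl.mp hj') hne,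
      neg_add_cancel, zero_smul]
  have hinner : ∀ j ∈ Jᶜ,
      dualD a (s + 1) (taylorSign J j • basisOfDeg a (s + 1) β (insert j J)) =
        ∑ j' ∈ Jᶜ, F (j, j') := fun j _ => by
    rw [map_zsmul, dualD_basisOfDeg, compl_insert,
      ← sum_erase (f := fun j' => F (j, j')) _ (hdiag j), smul_sum]
    simp only [F, smul_smul]
  rw [dualD_basisOfDeg, map_sum, sum_congr rfl hinner, ← sum_product']
  refine sum_involution (fun p _ => p.swap) (fun p hp => ?_) (fun p _ hp hfix => ?_)
    (fun p hp => mem_product.mpr (mem_product.mp hp).symm) (fun p _ => rfl)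
  · obtain ⟨h₁, h₂⟩ := mem_product.mp hp
    rcases eq_or_ne p.1 p.2 with h | h
    · rw [Prod.swap, ← h, hdiag, add_zero]
    · exact hswap _ h₁ _ h₂ h
  · exact hp (by rw [show p.2 = p.1 from congrArg Prod.fst hfix, hdiag])

lemma dualD_comp_dualD (s : ℕ) : dualD a (s + 1) ∘ₗ dualD (k := k) a s = 0 :=
  hom_ext_basisOfDeg a fun β _ hJ _ => dualD_dualD_basisOfDeg a s β hJ

noncomputable def contractAt (s : ℕ) (β : Fin m →₀ ℕ) (j₀ : Fin t) (J : Finset (Fin t)) :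
    DualX k m t s :=
  if j₀ ∈ J then taylorSign (J.erase j₀) j₀ • basisOfDeg a s β (J.erase j₀) else 0

lemma sum_contractAt_insert_of_notMem (s : ℕ) (β : Fin m →₀ ℕ) {j₀ : Fin t}
    {J : Finset (Fin t)} (hj₀ : j₀ ∉ J) :
    ∑ j ∈ Jᶜ, taylorSign J j • (contractAt a s β j₀ (insert j J) : DualX k m t s) =
      basisOfDeg a s β J := by
  rw [sum_eq_single_of_mem j₀ (mem_compl.mpr hj₀) fun j _ hne => ?_]
  · rw [contractAt, if_pos (mem_insert_self j₀ J), erase_insert hj₀, smul_smul,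
      taylorSign_mul_self, one_smul]
  · rw [contractAt, if_neg (by simp [hne.symm, hj₀]), smul_zero]

lemma dualD_contractAt_add_sum_of_mem (s : ℕ) (β : Fin m →₀ ℕ) {j₀ : Fin t}
    {J : Finset (Fin t)} (hj₀ : j₀ ∈ J) :
    dualD a s (contractAt a s β j₀ J : DualX k m t s) +
        ∑ j ∈ Jᶜ, taylorSign J j • contractAt a (s + 1) β j₀ (insert j J) =
      basisOfDeg a (s + 1) β J := by
  obtain ⟨J, hj₀J, rfl⟩ : ∃ J₀, j₀ ∉ J₀ ∧ J = insert j₀ J₀ :=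
    ⟨J.erase j₀, notMem_erase j₀ J, (insert_erase hj₀).symm⟩
  have hd : dualD a s (contractAt a s β j₀ (insert j₀ J) : DualX k m t s) =
      basisOfDeg a (s + 1) β (insert j₀ J) +
        ∑ j ∈ (insert j₀ J)ᶜ,
          taylorSign J j₀ • taylorSign J j • basisOfDeg a (s + 1) β (insert j J) := by
    rw [contractAt, if_pos (mem_insert_self j₀ J), erase_insert hj₀J, map_zsmul,
      dualD_basisOfDeg, ← insert_erase (mem_compl.mpr hj₀J), sum_insert (notMem_erase _ _),
      ← compl_insert, smul_add, smul_smul, taylorSign_mul_self, one_smul, smul_sum]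
  have hcancel : ∀ j ∈ (insert j₀ J)ᶜ,
      taylorSign J j₀ • taylorSign J j • basisOfDeg a (s + 1) β (insert j J) +
        taylorSign (insert j₀ J) j • contractAt a (s + 1) β j₀ (insert j (insert j₀ J)) =
      (0 : DualX k m t (s + 1)) := fun j hj => by
    obtain ⟨hne, hjJ⟩ : j ≠ j₀ ∧ j ∉ J := by simpa [not_or] using hj
    rw [contractAt, if_pos (mem_insert_of_mem (mem_insert_self j₀ J)), insert_comm,
      erase_insert (by simp [hj₀J, Ne.symm hne]), smul_smul, smul_smul, ← add_smul,
      taylorSign_insert_mul_taylorSign_insert hj₀J hjJ (Ne.symm hne), add_neg_cancel,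
      zero_smul]
  rw [hd, add_assoc, ← sum_add_distrib, sum_eq_zero hcancel, add_zero]

noncomputable def dividingIndices (β : Fin m →₀ ℕ) : Finset (Fin t) :=
  univ.filter fun i => a i ≤ β

noncomputable def homotopy (s : ℕ) : DualX k m t (s + 1) →ₗ[k] DualX k m t s :=
  Finsupp.linearCombination k fun p =>
    let β := p.1 + lcmExp a p.2.1
    if hβ : (dividingIndices a β).Nonempty then
      contractAt a s β ((dividingIndices a β).min' hβ) p.2.1
    else 0

lemma homotopy_basisOfDeg (s : ℕ) {β : Fin m →₀ ℕ} (hβ : (dividingIndices a β).Nonempty)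
    (J : Finset (Fin t)) :
    homotopy a s (basisOfDeg a (s + 1) β J : DualX k m t (s + 1)) =
      contractAt a s β ((dividingIndices a β).min' hβ) J := by
  by_cases h : J.card = s + 1 ∧ lcmExp a J ≤ β
  · rw [basisOfDeg, dif_pos h, homotopy, Finsupp.linearCombination_single, one_smul]
    simp only [tsub_add_cancel_of_le h.2, dif_pos hβ]
  have hj₀ : a ((dividingIndices a β).min' hβ) ≤ β := by
    simpa [dividingIndices] using min'_mem _ hβ
  rw [basisOfDeg_eq_zero a h, map_zero, contractAt]
  split_ifs with hmem
  · rw [basisOfDeg_eq_zero a, smul_zero]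
    rintro ⟨hcard, hle⟩
    rw [← insert_erase hmem, card_insert_of_notMem (notMem_erase _ _), lcmExp_insert] at h
    exact h ⟨by rw [hcard], sup_le hj₀ hle⟩
  · rfl

lemma dualD_homotopy_add_homotopy_dualD (s : ℕ) :
    dualD a s ∘ₗ homotopy a s + homotopy a (s + 1) ∘ₗ dualD (k := k) a (s + 1) =
      LinearMap.id := by
  refine hom_ext_basisOfDeg a fun β J hJ hJβ => ?_
  obtain ⟨i, hi⟩ := card_pos.mp (by omega : 0 < J.card)
  have hβ : (dividingIndices a β).Nonempty :=
    ⟨i, by simpa [dividingIndices] using (le_sup hi).trans hJβ⟩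
  simp only [LinearMap.add_apply, LinearMap.comp_apply, LinearMap.id_apply, dualD_basisOfDeg,
    map_sum, map_zsmul, homotopy_basisOfDeg a _ hβ]
  by_cases hj₀ : (dividingIndices a β).min' hβ ∈ J
  · exact dualD_contractAt_add_sum_of_mem a s β hj₀
  · rw [contractAt, if_neg hj₀, map_zero, zero_add, sum_contractAt_insert_of_notMem a _ β hj₀]

noncomputable def cProj : DualX k m t 0 →ₗ[k] CMod k m t a :=
  Finsupp.linearCombination k fun p =>
    if h : ∀ i, ¬ a i ≤ p.1 then Finsupp.single ⟨p.1, h⟩ 1 else 0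

lemma cIncl_single (c : {α : Fin m →₀ ℕ // ∀ i, ¬ a i ≤ α}) :
    cIncl a (Finsupp.single c 1 : CMod k m t a) = basisOfDeg a 0 c.1 ∅ := by
  rw [cIncl, Finsupp.lsum_single, LinearMap.toSpanSingleton_apply, one_smul,
    basisOfDeg_zero_empty]

lemma cProj_basisOfDeg_empty (β : Fin m →₀ ℕ) :
    cProj a (basisOfDeg a 0 β ∅ : DualX k m t 0) =
      if h : ∀ i, ¬ a i ≤ β then Finsupp.single ⟨β, h⟩ 1 else 0 := by
  rw [basisOfDeg_zero_empty, cProj, Finsupp.linearCombination_single, one_smul]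

lemma dualD_basisOfDeg_empty_of_forall_not_le {β : Fin m →₀ ℕ} (hβ : ∀ i, ¬ a i ≤ β) :
    dualD a 0 (basisOfDeg a 0 β ∅ : DualX k m t 0) = 0 := by
  rw [dualD_basisOfDeg]
  refine sum_eq_zero fun j _ => ?_
  rw [basisOfDeg_eq_zero a, smul_zero]
  rw [lcmExp_insert, sup_le_iff]
  exact fun h => hβ j h.2.1

lemma cProj_comp_cIncl : cProj a ∘ₗ cIncl (k := k) a = LinearMap.id :=
  Finsupp.lhom_ext' fun c => LinearMap.ext_ring <| by
    simp [cIncl_single, cProj_basisOfDeg_empty, c.2]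

lemma dualD_comp_cIncl : dualD a 0 ∘ₗ cIncl (k := k) a = 0 :=
  Finsupp.lhom_ext' fun c => LinearMap.ext_ring <| by
    simp [cIncl_single, dualD_basisOfDeg_empty_of_forall_not_le a c.2]

lemma cIncl_cProj_add_homotopy_dualD :
    cIncl a ∘ₗ cProj a + homotopy a 0 ∘ₗ dualD (k := k) a 0 = LinearMap.id := by
  refine hom_ext_basisOfDeg a fun β J hJ _ => ?_
  obtain rfl := card_eq_zero.mp hJ
  simp only [LinearMap.add_apply, LinearMap.comp_apply, LinearMap.id_apply,
    cProj_basisOfDeg_empty]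
  by_cases hβ : ∀ i, ¬ a i ≤ β
  · rw [dif_pos hβ, cIncl_single, dualD_basisOfDeg_empty_of_forall_not_le a hβ, map_zero,
      add_zero]
  · have hne : (dividingIndices a β).Nonempty := by
      simpa [dividingIndices, Finset.Nonempty] using hβ
    rw [dif_neg hβ, map_zero, zero_add, dualD_basisOfDeg, map_sum]
    simp only [map_zsmul, homotopy_basisOfDeg a 0 hne]
    exact sum_contractAt_insert_of_notMem a 0 β (notMem_empty _)

end DualTaylor

/-- the augmented complex 0 → C(𝔪) → I^0 → I^1 → ⋯ → I^t → 0
is exact; in particular T′(𝔪_1,…,𝔪_t) is a resolution of C(𝔪_1,…,𝔪_t). -/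
theorem dual_taylor_is_resolution {k : Type*} [CommRing k] {m t : ℕ}
    (a : Fin t → (Fin m →₀ ℕ)) :
    -- exactness at C(𝔪): injectivity of the coaugmentation
    Function.Injective (cIncl (k := k) a) ∧
    -- exactness at I^0: ker ∂ = range of the coaugmentation
    (∀ x : DualX k m t 0,
      dualD (k := k) a 0 x = 0 ↔ ∃ c : CMod k m t a, cIncl (k := k) a c = x) ∧
    -- exactness at I^s for every s ≥ 1 (I^s = 0 for s > t, so this includes
    -- exactness at I^t, i.e. surjectivity of ∂ : I^{t-1} → I^t)
    (∀ s : ℕ, ∀ x : DualX k m t (s + 1),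
      dualD (k := k) a (s + 1) x = 0 ↔ ∃ y : DualX k m t s, dualD (k := k) a s y = x) := by
  open DualTaylor in
  exact ⟨Function.LeftInverse.injective (g := cProj a) (LinearMap.congr_fun (cProj_comp_cIncl a)),
    LinearMap.exact_of_comp_eq_zero_of_add_eq_id (dualD_comp_cIncl a)
      (cIncl_cProj_add_homotopy_dualD a),
    fun s => LinearMap.exact_of_comp_eq_zero_of_add_eq_id (dualD_comp_dualD a s)
      (dualD_homotopy_add_homotopy_dualD a s)⟩
end

section
/- Let 𝔪_1,…,𝔪_t be monomials in x_1,…,x_m and n_i = 𝔪_i/gcd(𝔪_i,𝔪_t) for i = 1,…,t−1. The k-linear maps φ̃′_s from the s-th term of T′(𝔪_1,…,𝔪_{t−1}) to the s-th term of T′(n_1,…,n_{t−1}) defined on basis elements by φ̃′(x^α e^J) = (x^α·𝔪_J/𝔪_{J∪{t}})·ē^J for J ⊆ {1,…,t−1} (the image being zero unless 𝔪_{J∪{t}} divides x^α·𝔪_J) commute with the dual Taylor differentials, i.e. φ̃′ is a cochain map. -/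
/-!
STATEMENT 11: the maps φ̃′(x^α e^J) = (x^α·𝔪_J/𝔪_{J∪{t}})·ē^J (the image being
zero unless 𝔪_{J∪{t}} divides x^α·𝔪_J) form a cochain map
T′(𝔪_1,…,𝔪_{t−1}) → T′(n_1,…,n_{t−1}).

Monomials in x_1,…,x_m are given by exponent vectors in `Fin m →₀ ℕ`:
𝔪_1,…,𝔪_{t−1} have exponent vectors `a i` (indexed by `i : Fin n`, n = t−1),
𝔪_t has exponent vector `b`; n_i = 𝔪_i/gcd(𝔪_i,𝔪_t) has exponent vector
`a i - a i ⊓ b`, and 𝔪_{J∪{t}} has exponent vector `J.sup a ⊔ b`.  Both dual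
Taylor complexes have the same underlying free k-modules `DualX k m n s`
(with basis x^α e^J, |J| = s), only the differentials differ.
-/

open Finset

open scoped Classical in
/-- The map φ̃′ in degree s, given on basis elements by
φ̃′(x^α e^J) = (x^α·𝔪_J/𝔪_{J∪{t}})·ē^J, the image being zero unless
𝔪_{J∪{t}} divides x^α·𝔪_J. -/
noncomputable def dualPhi {k : Type*} [CommRing k] {m n : ℕ}
    (a : Fin n → (Fin m →₀ ℕ)) (b : Fin m →₀ ℕ) (s : ℕ) :
    DualX k m n s →ₗ[k] DualX k m n s :=
  Finsupp.lsum ℕ fun p =>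
    LinearMap.toSpanSingleton k (DualX k m n s)
      (if lcmExp a p.2.1 ⊔ b ≤ p.1 + lcmExp a p.2.1 then
        Finsupp.single (p.1 + lcmExp a p.2.1 - (lcmExp a p.2.1 ⊔ b), p.2) (1 : k)
      else 0)


/-!
Write a basis element as a quotient, x^α e^J = (x^α 𝔪_J / 𝔪_J) e^J. Then ∂ replaces the
denominator 𝔪_J by 𝔪_{J∪{j}} and φ̃′ replaces it by 𝔪_{J∪{t}}, so φ̃′∂ sends x^α e^J to
Σ_j sign(j,J) (x^α 𝔪_J / 𝔪_{J∪{j,t}}) e^{J∪{j}}. The lcm n_J of the n_i has the exponent of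
𝔪_J / gcd(𝔪_J, 𝔪_t); hence, when 𝔪_t divides x^α 𝔪_J, φ̃′(x^α e^J) = ((x^α 𝔪_J / 𝔪_t) / n_J) e^J,
and ∂′ replaces n_J by n_{J∪{j}}, which again divides x^α 𝔪_J by 𝔪_{J∪{j,t}}. When 𝔪_t does
not divide x^α 𝔪_J, both composites vanish.
-/

namespace Finsupp

variable {ι : Type*}

theorem tsub_inf_self_left (u v : ι →₀ ℕ) : u - u ⊓ v = u - v := by
  ext i
  simp only [tsub_apply, inf_apply]
  omega

theorem sup_tsub (u v w : ι →₀ ℕ) : (u ⊔ v) - w = (u - w) ⊔ (v - w) := by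
  ext i
  simp only [tsub_apply, sup_apply]
  omega

theorem sup_le_iff_tsub_le_tsub {u v b : ι →₀ ℕ} (hb : b ≤ u) :
    v ⊔ b ≤ u ↔ v - b ≤ u - b := by
  simp only [le_def, sup_apply, tsub_apply] at hb ⊢
  exact forall_congr' fun i => by have := hb i; omega

theorem tsub_sup_eq_tsub_tsub {u v b : ι →₀ ℕ} (hb : b ≤ u) :
    u - (v ⊔ b) = (u - b) - (v - b) := by
  ext i
  have := hb i
  simp only [tsub_apply, sup_apply]
  omega

end Finsupp

section DualTaylor

variable {k : Type*} [CommRing k] {m t s : ℕ}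

theorem lcmExp_le_insert (a : Fin t → (Fin m →₀ ℕ)) (J : Finset (Fin t)) (j : Fin t) :
    lcmExp a J ≤ lcmExp a (insert j J) :=
  sup_mono (subset_insert j J)

theorem lcmExp_tsub (a : Fin t → (Fin m →₀ ℕ)) (b : Fin m →₀ ℕ) (J : Finset (Fin t)) :
    lcmExp (fun i => a i - a i ⊓ b) J = lcmExp a J - b := by
  classical
  induction J using Finset.induction with
  | empty => simp [lcmExp, bot_eq_zero]
  | insert i J _ ih =>
    simp only [lcmExp, sup_insert] at ih ⊢
    rw [ih, Finsupp.tsub_inf_self_left, Finsupp.sup_tsub]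

def insertCompl (J : {J : Finset (Fin t) // J.card = s}) (j : ↥(J.1ᶜ)) :
    {K : Finset (Fin t) // K.card = s + 1} :=
  ⟨insert j.1 J.1, by rw [card_insert_of_notMem (mem_compl.mp j.2), J.2]⟩

open scoped Classical in
/-- The element (x^u / x^v) e^J of the dual Taylor complex, zero unless x^v divides x^u. -/
noncomputable def quotSingle (u v : Fin m →₀ ℕ) (J : {J : Finset (Fin t) // J.card = s})
    (c : k) : DualX k m t s :=
  if v ≤ u then Finsupp.single (u - v, J) c else 0

theorem quotSingle_eq_zero {u v : Fin m →₀ ℕ} (h : ¬v ≤ u)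
    (J : {J : Finset (Fin t) // J.card = s}) (c : k) : quotSingle u v J c = 0 :=
  if_neg h

theorem single_eq_quotSingle (a : Fin t → (Fin m →₀ ℕ)) (α : Fin m →₀ ℕ)
    (J : {J : Finset (Fin t) // J.card = s}) (c : k) :
    Finsupp.single (α, J) c = quotSingle (α + lcmExp a J.1) (lcmExp a J.1) J c := by
  rw [quotSingle, if_pos le_add_self, add_tsub_cancel_right]

theorem quotSingle_sup_eq {u v b : Fin m →₀ ℕ} (hb : b ≤ u)
    (J : {J : Finset (Fin t) // J.card = s}) (c : k) :
    quotSingle u (v ⊔ b) J c = quotSingle (u - b) (v - b) J c := by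
  simp only [quotSingle, Finsupp.sup_le_iff_tsub_le_tsub hb, Finsupp.tsub_sup_eq_tsub_tsub hb]

theorem quotSingle_sup_eq_zero {u v b : Fin m →₀ ℕ} (hb : ¬b ≤ u)
    (J : {J : Finset (Fin t) // J.card = s}) (c : k) : quotSingle u (v ⊔ b) J c = 0 :=
  quotSingle_eq_zero (fun h => hb (le_sup_right.trans h)) J c

theorem dualD_quotSingle (a : Fin t → (Fin m →₀ ℕ)) (u : Fin m →₀ ℕ)
    (J : {J : Finset (Fin t) // J.card = s}) (c : k) :
    dualD a s (quotSingle u (lcmExp a J.1) J c) =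
      ∑ j ∈ J.1ᶜ.attach,
        taylorSign J.1 j.1 • quotSingle u (lcmExp a (insertCompl J j).1) (insertCompl J j) c := by
  by_cases h : lcmExp a J.1 ≤ u
  · rw [quotSingle, if_pos h, dualD, Finsupp.lsum_single, LinearMap.toSpanSingleton_apply,
      tsub_add_cancel_of_le h, smul_sum]
    refine sum_congr rfl fun j _ => ?_
    by_cases hj : lcmExp a (insert j.1 J.1) ≤ u
    · simp only [quotSingle, insertCompl, hj, ↓reduceIte, smul_comm c, Finsupp.smul_single_one]
    · simp only [quotSingle, insertCompl, hj, ↓reduceIte, smul_zero]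
  · rw [quotSingle_eq_zero h, map_zero]
    refine (sum_eq_zero fun j _ => ?_).symm
    exact smul_eq_zero_of_right _
      (quotSingle_eq_zero (fun h' => h ((lcmExp_le_insert a J.1 j.1).trans h')) _ c)

theorem dualPhi_quotSingle (a : Fin t → (Fin m →₀ ℕ)) (b u : Fin m →₀ ℕ)
    (J : {J : Finset (Fin t) // J.card = s}) (c : k) :
    dualPhi a b s (quotSingle u (lcmExp a J.1) J c) = quotSingle u (lcmExp a J.1 ⊔ b) J c := by
  by_cases h : lcmExp a J.1 ≤ u
  · rw [quotSingle, if_pos h, dualPhi, Finsupp.lsum_single, LinearMap.toSpanSingleton_apply,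
      tsub_add_cancel_of_le h, quotSingle]
    split_ifs <;> simp
  · rw [quotSingle_eq_zero h, map_zero, quotSingle_eq_zero (fun h' => h (le_sup_left.trans h'))]

end DualTaylor

/-- φ̃′ commutes with the dual Taylor differentials of
T′(𝔪_1,…,𝔪_{t−1}) and T′(n_1,…,n_{t−1}), i.e. φ̃′ is a cochain map. -/
theorem dualPhi_cochain_map {k : Type*} [CommRing k] {m n : ℕ}
    (a : Fin n → (Fin m →₀ ℕ)) (b : Fin m →₀ ℕ) :
    ∀ s : ℕ,
      (dualPhi (k := k) a b (s + 1)).comp (dualD (k := k) a s) =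
        (dualD (k := k) (fun i => a i - a i ⊓ b) s).comp (dualPhi (k := k) a b s) := by
  intro s
  refine Finsupp.lhom_ext fun ⟨α, J⟩ c => ?_
  rw [LinearMap.comp_apply, LinearMap.comp_apply, single_eq_quotSingle a, dualD_quotSingle,
    dualPhi_quotSingle, map_sum]
  simp only [map_zsmul, dualPhi_quotSingle]
  by_cases hb : b ≤ α + lcmExp a J.1
  · simp only [quotSingle_sup_eq hb, ← lcmExp_tsub a b, dualD_quotSingle]
  · simp only [quotSingle_sup_eq_zero hb, map_zero, smul_zero, sum_const_zero]
end

section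
/- Let K be an abstract simplicial complex on [m] = {1,…,m}, let K_1,…,K_m be abstract simplicial complexes on pairwise disjoint finite vertex sets V_1,…,V_m, and let K(K_1,…,K_m) be the substitution complex. A subset I ⊆ V_1 ∪ … ∪ V_m is a missing face of K(K_1,…,K_m) if and only if either (i) I is a missing face of some K_i, or (ii) there exist a missing face {i_1,…,i_k} of K (with i_1,…,i_k distinct) and vertices j_l ∈ V_{i_l} for l = 1,…,k such that I = {j_1,…,j_k}. -/
/-!
A set `F ⊆ V₁ ∪ … ∪ V_m` is a face of `K(K₁,…,K_m)` exactly when its block support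
`{i | F ∩ V_i ≠ ∅}` is a face of `K` and every block `F ∩ V_i` is a face of `K_i`.
If a missing face `I` has a block `I ∩ V_i ∉ K_i`, minimality forces `I ⊆ V_i`. Otherwise its
block support is not in `K`; removing a whole block from `I` shows that every proper subset of
the support is in `K`, and removing a single vertex shows that each block of `I` has at most one
vertex, so `I` is a transversal of a missing face of `K`.
-/

open Finset

/-- An abstract simplicial complex on the finite vertex set `V ⊆ W`:
a collection of subsets of V containing the empty set and all singletons and
closed under passing to subsets. -/
structure SimplicialOn (W : Type*) [DecidableEq W] (V : Finset W) where
  faces : Set (Finset W)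
  subset_of_mem : ∀ F ∈ faces, F ⊆ V
  empty_mem : ∅ ∈ faces
  singleton_mem : ∀ v ∈ V, {v} ∈ faces
  down_closed : ∀ F ∈ faces, ∀ G ⊆ F, G ∈ faces

/-- The substitution complex K(K₁,…,K_m): the collection of all subsets of
V₁ ∪ … ∪ V_m of the form I_{j₁} ∪ … ∪ I_{j_k} with {j₁,…,j_k} ∈ K and
I_{j_l} ∈ K_{j_l}. -/
def substitution {W : Type*} [DecidableEq W] {m : ℕ} {V : Fin m → Finset W}
    (K : SimplicialOn (Fin m) Finset.univ)
    (Ks : ∀ i, SimplicialOn W (V i)) : Set (Finset W) :=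
  { F | ∃ s ∈ K.faces, ∃ I : Fin m → Finset W,
      (∀ j ∈ s, I j ∈ (Ks j).faces) ∧ F = s.biUnion I }

/-- `I` is a missing face of the collection of faces `S` of a simplicial
complex with vertex set `V`: I ⊆ V, I ∉ S, and every proper subset of I
belongs to S. -/
def IsMissingFace {W : Type*} [DecidableEq W] (S : Set (Finset W)) (V : Finset W)
    (I : Finset W) : Prop :=
  I ⊆ V ∧ I ∉ S ∧ ∀ G ⊂ I, G ∈ S

open Function

section BlockSupport

variable {ι W : Type*} [Fintype ι] [DecidableEq W] {V : ι → Finset W}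

def blockSupport (V : ι → Finset W) (F : Finset W) : Finset ι :=
  univ.filter fun i => (F ∩ V i).Nonempty

@[simp]
lemma mem_blockSupport {F : Finset W} {i : ι} :
    i ∈ blockSupport V F ↔ (F ∩ V i).Nonempty := by
  simp [blockSupport]

lemma mem_blockSupport_of_mem {F : Finset W} {i : ι} {x : W} (hxF : x ∈ F) (hxV : x ∈ V i) :
    i ∈ blockSupport V F :=
  mem_blockSupport.2 ⟨x, mem_inter.2 ⟨hxF, hxV⟩⟩

omit [Fintype ι] [DecidableEq W] in
lemma eq_of_mem_of_pairwise_disjoint (hdisj : Pairwise (Disjoint on V)) {x : W} {i j : ι}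
    (hi : x ∈ V i) (hj : x ∈ V j) : i = j :=
  hdisj.eq (not_disjoint_iff.2 ⟨x, hi, hj⟩)

omit [Fintype ι] in
lemma biUnion_inter_eq_ite [DecidableEq ι] (hdisj : Pairwise (Disjoint on V)) {s : Finset ι}
    {J : ι → Finset W} (hJ : ∀ j ∈ s, J j ⊆ V j) (i : ι) :
    s.biUnion J ∩ V i = if i ∈ s then J i else ∅ := by
  ext x
  simp only [mem_inter, mem_biUnion]
  constructor
  · rintro ⟨⟨j, hj, hx⟩, hxi⟩
    obtain rfl := eq_of_mem_of_pairwise_disjoint hdisj hxi (hJ j hj hx)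
    simp [hj, hx]
  · split_ifs with hi
    · exact fun hx => ⟨⟨i, hi, hx⟩, hJ i hi hx⟩
    · simp

lemma blockSupport_sdiff [DecidableEq ι] (hdisj : Pairwise (Disjoint on V)) (F : Finset W)
    (i : ι) : blockSupport V (F \ V i) = (blockSupport V F).erase i := by
  ext j
  simp only [mem_erase, mem_blockSupport]
  constructor
  · rintro ⟨x, hx⟩
    simp only [mem_inter, mem_sdiff] at hx
    exact ⟨fun hji => hx.1.2 (hji ▸ hx.2), x, mem_inter.2 ⟨hx.1.1, hx.2⟩⟩
  · rintro ⟨hji, x, hx⟩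
    rw [mem_inter] at hx
    exact ⟨x, mem_inter.2 ⟨mem_sdiff.2 ⟨hx.1, fun hxi =>
      hji (eq_of_mem_of_pairwise_disjoint hdisj hx.2 hxi)⟩, hx.2⟩⟩

lemma blockSupport_image (hdisj : Pairwise (Disjoint on V)) {s : Finset ι} {g : ι → W}
    (hg : ∀ i ∈ s, g i ∈ V i) : blockSupport V (s.image g) = s := by
  ext i
  rw [mem_blockSupport]
  constructor
  · rintro ⟨x, hx⟩
    rw [mem_inter] at hx
    obtain ⟨j, hj, rfl⟩ := mem_image.1 hx.1
    exact eq_of_mem_of_pairwise_disjoint hdisj hx.2 (hg j hj) ▸ hj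
  · exact fun hi => ⟨g i, mem_inter.2 ⟨mem_image_of_mem g hi, hg i hi⟩⟩

lemma exists_forall_mem_blockSupport [Nonempty W] (F : Finset W) :
    ∃ g : ι → W, ∀ i ∈ blockSupport V F, g i ∈ F ∩ V i := by
  have (i : ι) : ∃ x, i ∈ blockSupport V F → x ∈ F ∩ V i := by
    by_cases hi : i ∈ blockSupport V F
    · exact (mem_blockSupport.1 hi).imp fun x hx _ => hx
    · exact ⟨Classical.arbitrary W, fun h => (hi h).elim⟩
  exact Classical.axiomOfChoice this

lemma eq_image_blockSupport {F : Finset W} {g : ι → W} (hF : F ⊆ univ.biUnion V)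
    (hsub : ∀ i, (↑(F ∩ V i) : Set W).Subsingleton)
    (hg : ∀ i ∈ blockSupport V F, g i ∈ F ∩ V i) : F = (blockSupport V F).image g := by
  ext x
  constructor
  · intro hx
    obtain ⟨i, -, hxi⟩ := mem_biUnion.1 (hF hx)
    have hi := mem_blockSupport_of_mem hx hxi
    exact mem_image.2 ⟨i, hi, hsub i (hg i hi) (mem_inter.2 ⟨hx, hxi⟩)⟩
  · intro hx
    obtain ⟨i, hi, rfl⟩ := mem_image.1 hx
    exact (mem_inter.1 (hg i hi)).1

end BlockSupport

section Substitution

variable {W : Type*} [DecidableEq W] {m : ℕ} {V : Fin m → Finset W}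
  {K : SimplicialOn (Fin m) univ} {Ks : ∀ i, SimplicialOn W (V i)}

lemma inter_mem_of_mem_substitution (hdisj : Pairwise (Disjoint on V)) {F : Finset W}
    (hF : F ∈ substitution K Ks) (i : Fin m) : F ∩ V i ∈ (Ks i).faces := by
  obtain ⟨s, -, J, hJ, rfl⟩ := hF
  rw [biUnion_inter_eq_ite hdisj fun j hj => (Ks j).subset_of_mem _ (hJ j hj)]
  split_ifs with hi
  · exact hJ i hi
  · exact (Ks i).empty_mem

lemma blockSupport_mem_of_mem_substitution (hdisj : Pairwise (Disjoint on V)) {F : Finset W}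
    (hF : F ∈ substitution K Ks) : blockSupport V F ∈ K.faces := by
  obtain ⟨s, hs, J, hJ, rfl⟩ := hF
  refine K.down_closed s hs _ fun i hi => ?_
  rw [mem_blockSupport, biUnion_inter_eq_ite hdisj fun j hj => (Ks j).subset_of_mem _ (hJ j hj)]
    at hi
  by_contra his
  simp [his] at hi

lemma mem_substitution_of_blockSupport_mem {F : Finset W} (hF : F ⊆ univ.biUnion V)
    (hsupp : blockSupport V F ∈ K.faces) (hinter : ∀ i, F ∩ V i ∈ (Ks i).faces) :
    F ∈ substitution K Ks := by
  refine ⟨blockSupport V F, hsupp, fun i => F ∩ V i, fun i _ => hinter i, ?_⟩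
  ext x
  rw [mem_biUnion]
  constructor
  · intro hx
    obtain ⟨i, -, hxi⟩ := mem_biUnion.1 (hF hx)
    exact ⟨i, mem_blockSupport_of_mem hx hxi, mem_inter.2 ⟨hx, hxi⟩⟩
  · rintro ⟨i, -, hx⟩
    exact (mem_inter.1 hx).1

lemma mem_substitution_of_mem_faces {i : Fin m} {F : Finset W} (hF : F ∈ (Ks i).faces) :
    F ∈ substitution K Ks :=
  ⟨{i}, K.singleton_mem i (mem_univ i), fun _ => F, by simpa using hF, by simp⟩

lemma image_mem_substitution {s : Finset (Fin m)} (hs : s ∈ K.faces) {g : Fin m → W}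
    (hg : ∀ i ∈ s, g i ∈ V i) : s.image g ∈ substitution K Ks :=
  ⟨s, hs, fun i => {g i}, fun i hi => (Ks i).singleton_mem _ (hg i hi), biUnion_singleton.symm⟩

lemma IsMissingFace.substitution_of_component (hdisj : Pairwise (Disjoint on V)) {i : Fin m}
    {I : Finset W} (h : IsMissingFace (Ks i).faces (V i) I) :
    IsMissingFace (substitution K Ks) (univ.biUnion V) I := by
  obtain ⟨hIV, hI, hmin⟩ := h
  refine ⟨hIV.trans (subset_biUnion_of_mem V (mem_univ i)), fun hsub => hI ?_,
    fun G hG => mem_substitution_of_mem_faces (hmin G hG)⟩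
  simpa [inter_eq_left.2 hIV] using inter_mem_of_mem_substitution hdisj hsub i

lemma IsMissingFace.substitution_image (hdisj : Pairwise (Disjoint on V)) {s : Finset (Fin m)}
    (h : IsMissingFace K.faces univ s) {g : Fin m → W} (hg : ∀ i ∈ s, g i ∈ V i) :
    IsMissingFace (substitution K Ks) (univ.biUnion V) (s.image g) := by
  obtain ⟨-, hs, hmin⟩ := h
  refine ⟨fun x hx => ?_, fun hsub => hs ?_, fun G hG => ?_⟩
  · obtain ⟨i, hi, rfl⟩ := mem_image.1 hx
    exact mem_biUnion.2 ⟨i, mem_univ i, hg i hi⟩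
  · simpa [blockSupport_image hdisj hg] using blockSupport_mem_of_mem_substitution hdisj hsub
  · obtain ⟨t, hts, rfl⟩ := subset_image_iff.1 hG.subset
    have hts' : t ⊂ s := ssubset_of_subset_of_ne hts (by rintro rfl; exact hG.ne rfl)
    exact image_mem_substitution (hmin t hts') fun i hi => hg i (hts hi)

lemma IsMissingFace.of_substitution_of_inter_not_mem (hdisj : Pairwise (Disjoint on V))
    {I : Finset W} (h : IsMissingFace (substitution K Ks) (univ.biUnion V) I) {i : Fin m}
    (hi : I ∩ V i ∉ (Ks i).faces) : IsMissingFace (Ks i).faces (V i) I := by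
  obtain ⟨-, -, hmin⟩ := h
  have hIV : I ⊆ V i := by
    by_contra hIV
    have hssub : I ∩ V i ⊂ I :=
      ssubset_of_subset_of_ne inter_subset_left fun he => hIV (inter_eq_left.1 he)
    have := inter_mem_of_mem_substitution hdisj (hmin _ hssub) i
    rw [inter_assoc, inter_self] at this
    exact hi this
  refine ⟨hIV, by rwa [inter_eq_left.2 hIV] at hi, fun G hG => ?_⟩
  simpa [inter_eq_left.2 (hG.subset.trans hIV)] using
    inter_mem_of_mem_substitution hdisj (hmin G hG) i

section AllBlocksFaces

variable {I : Finset W} (h : IsMissingFace (substitution K Ks) (univ.biUnion V) I)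
  (hinter : ∀ i, I ∩ V i ∈ (Ks i).faces)
include h hinter

lemma IsMissingFace.blockSupport_not_mem_of_substitution : blockSupport V I ∉ K.faces :=
  fun hK => h.2.1 (mem_substitution_of_blockSupport_mem h.1 hK hinter)

lemma IsMissingFace.blockSupport_of_substitution (hdisj : Pairwise (Disjoint on V)) :
    IsMissingFace K.faces univ (blockSupport V I) := by
  refine ⟨subset_univ _, h.blockSupport_not_mem_of_substitution hinter, fun t ht => ?_⟩
  obtain ⟨i, hi, hit⟩ := exists_of_ssubset ht
  obtain ⟨x, hx⟩ := mem_blockSupport.1 hi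
  have hssub : I \ V i ⊂ I :=
    (ssubset_iff_of_subset sdiff_subset).2 ⟨x, (mem_inter.1 hx).1, fun hx' =>
      (mem_sdiff.1 hx').2 (mem_inter.1 hx).2⟩
  have := blockSupport_mem_of_mem_substitution hdisj (h.2.2 _ hssub)
  rw [blockSupport_sdiff hdisj] at this
  exact K.down_closed _ this t (subset_erase.2 ⟨ht.subset, hit⟩)

lemma IsMissingFace.subsingleton_inter_of_substitution (hdisj : Pairwise (Disjoint on V))
    (i : Fin m) : (↑(I ∩ V i) : Set W).Subsingleton := by
  intro x hx y hy
  rw [mem_coe, mem_inter] at hx hy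
  by_contra hxy
  refine h.blockSupport_not_mem_of_substitution hinter ?_
  -- deleting `y` keeps the block support, since `x` still represents block `i`
  have hsupp : blockSupport V I ⊆ blockSupport V (I.erase y) := by
    intro j hj
    obtain ⟨z, hz⟩ := mem_blockSupport.1 hj
    rw [mem_inter] at hz
    by_cases hzy : z = y
    · subst hzy
      obtain rfl := eq_of_mem_of_pairwise_disjoint hdisj hz.2 hy.2
      exact mem_blockSupport_of_mem (mem_erase.2 ⟨hxy, hx.1⟩) hx.2
    · exact mem_blockSupport_of_mem (mem_erase.2 ⟨hzy, hz.1⟩) hz.2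
  exact K.down_closed _
    (blockSupport_mem_of_mem_substitution hdisj (h.2.2 _ (erase_ssubset hy.1))) _ hsupp

end AllBlocksFaces

end Substitution

/-- description of the missing faces of a substitution complex:
I is a missing face of K(K₁,…,K_m) iff either I is a missing face of some K_i,
or I is obtained from a missing face s = {i₁,…,i_k} of K by choosing one vertex
j_l ∈ V_{i_l} for each l (i.e. I = s.image g with g i ∈ V i for all i ∈ s). -/
theorem substitution_missing_faces {W : Type*} [DecidableEq W] {m : ℕ}
    (V : Fin m → Finset W)
    (hdisj : ∀ i j, i ≠ j → Disjoint (V i) (V j))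
    (K : SimplicialOn (Fin m) Finset.univ)
    (Ks : ∀ i, SimplicialOn W (V i)) (I : Finset W) :
    IsMissingFace (substitution K Ks) (Finset.univ.biUnion V) I ↔
      ((∃ i, IsMissingFace (Ks i).faces (V i) I) ∨
        (∃ s : Finset (Fin m), IsMissingFace K.faces Finset.univ s ∧
          ∃ g : Fin m → W, (∀ i ∈ s, g i ∈ V i) ∧ I = s.image g)) := by
  constructor
  · intro h
    by_cases hinter : ∀ i, I ∩ V i ∈ (Ks i).faces
    · have hsupp := h.blockSupport_of_substitution hinter hdisj
      obtain ⟨i, hi⟩ : (blockSupport V I).Nonempty :=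
        nonempty_iff_ne_empty.2 fun he => hsupp.2.1 (he ▸ K.empty_mem)
      obtain ⟨w, -⟩ := mem_blockSupport.1 hi
      have : Nonempty W := ⟨w⟩
      obtain ⟨g, hg⟩ := exists_forall_mem_blockSupport (V := V) I
      exact .inr ⟨_, hsupp, g, fun i hi => (mem_inter.1 (hg i hi)).2,
        eq_image_blockSupport h.1 (h.subsingleton_inter_of_substitution hinter hdisj) hg⟩
    · obtain ⟨i, hi⟩ := not_forall.1 hinter
      exact .inl ⟨i, h.of_substitution_of_inter_not_mem hdisj hi⟩
  · rintro (⟨i, h⟩ | ⟨s, hs, g, hg, rfl⟩)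
    · exact h.substitution_of_component hdisj
    · exact hs.substitution_image hdisj hg
end
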